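/- arXiv:2010.05459 — 4 statements merged into one kernel-verified Lean document; each statement's English description precedes it below -/
import Mathlib

section
/- Let n ≥ 1 and S be natural numbers, and set a = ⌊S/n⌋ and b = S − a·n. Then for every tuple (w_1, …, w_n) of natural numbers with ∑_{k=1}^n w_k = S one has ∑_{k=1}^n 2^{w_k} ≥ (n − b)·2^a + b·2^{a+1}, and this lower bound is attained by the balanced tuple having b coordinates equal to a+1 and n − b coordinates equal to a. Consequently (n − b)(2^a − 1) + b(2^{a+1} − 1) is the minimum of ∑_{k=1}^n (2^{w_k} − 1) over all such tuples. -/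
/-!
Convexity of `x ↦ 2 ^ x` in its discrete form: the chord inequality
`2 ^ a * (w + 1) ≤ 2 ^ w + a * 2 ^ a`, i.e. `2 ^ w` lies above the line through `(a, 2 ^ a)` and
`(a + 1, 2 ^ (a + 1))`. Summing it over a tuple with `∑ w = a n + b` gives
`∑ 2 ^ w ≥ 2 ^ a (n + b)`, which is the value of the balanced tuple. Subtracting one per
coordinate turns this into the bound on `∑ (2 ^ w - 1)`.
-/

open Finset

theorem Fin.sum_univ_ite_lt {M : Type*} [AddCommMonoid M] {n b : ℕ} (hb : b ≤ n) (x y : M) :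
    ∑ k : Fin n, (if (k : ℕ) < b then x else y) = b • x + (n - b) • y := by
  obtain ⟨m, rfl⟩ := Nat.exists_eq_add_of_le hb
  rw [Fin.sum_univ_add]
  simp

theorem Nat.two_pow_mul_succ_le (a w : ℕ) : 2 ^ a * (w + 1) ≤ 2 ^ w + a * 2 ^ a := by
  rcases le_or_gt a w with h | h
  · obtain ⟨d, rfl⟩ := Nat.exists_eq_add_of_le h
    have hd : d + 1 ≤ 2 ^ d := Nat.lt_two_pow_self
    calc 2 ^ a * (a + d + 1) = 2 ^ a * (d + 1) + a * 2 ^ a := by ring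
      _ ≤ 2 ^ a * 2 ^ d + a * 2 ^ a := by gcongr
      _ = 2 ^ (a + d) + a * 2 ^ a := by rw [pow_add]
  · calc 2 ^ a * (w + 1) ≤ 2 ^ a * a := by gcongr; exact h
      _ ≤ 2 ^ w + a * 2 ^ a := by rw [mul_comm]; exact Nat.le_add_left _ _

theorem Finset.two_pow_mul_card_add_le_sum_two_pow {ι : Type*} (s : Finset ι) (w : ι → ℕ)
    {a b : ℕ} (hw : ∑ i ∈ s, w i = a * #s + b) :
    2 ^ a * (#s + b) ≤ ∑ i ∈ s, 2 ^ w i := by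
  have key := sum_le_sum fun i (_ : i ∈ s) => Nat.two_pow_mul_succ_le a (w i)
  rw [← mul_sum, sum_add_distrib, sum_add_distrib, hw, sum_const, sum_const, smul_eq_mul,
    smul_eq_mul, mul_one] at key
  have hsplit : 2 ^ a * (a * #s + b + #s) = 2 ^ a * (#s + b) + #s * (a * 2 ^ a) := by ring
  omega

theorem Finset.sum_two_pow_sub_one {ι : Type*} (s : Finset ι) (w : ι → ℕ) :
    ∑ i ∈ s, (2 ^ w i - 1) = ∑ i ∈ s, 2 ^ w i - #s := by
  rw [sum_tsub_distrib _ fun i _ => Nat.one_le_two_pow, sum_const, smul_eq_mul, mul_one]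

/-- Minimizing `∑ (2^{w_k} - 1)` over tuples with fixed sum `S`: the lower
bound `(n - b) 2^a + b 2^(a+1)` holds for `∑ 2^{w_k}`, it is attained by the
balanced tuple with `b` coordinates equal to `a + 1` and `n - b` coordinates
equal to `a`, and consequently `(n - b)(2^a - 1) + b(2^(a+1) - 1)` is the
minimum of `∑ (2^{w_k} - 1)`. -/
theorem min_mac_conditions_balanced (n S : ℕ) (hn : 1 ≤ n)
    (a b : ℕ) (ha : a = S / n) (hb : b = S - a * n) :
    (∀ w : Fin n → ℕ, ∑ k, w k = S →
      (n - b) * 2 ^ a + b * 2 ^ (a + 1) ≤ ∑ k, 2 ^ w k) ∧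
    (∑ k : Fin n, (if (k : ℕ) < b then a + 1 else a) = S ∧
      ∑ k : Fin n, 2 ^ (if (k : ℕ) < b then a + 1 else a) =
        (n - b) * 2 ^ a + b * 2 ^ (a + 1)) ∧
    IsLeast {t : ℕ | ∃ w : Fin n → ℕ, ∑ k, w k = S ∧ t = ∑ k, (2 ^ w k - 1)}
      ((n - b) * (2 ^ a - 1) + b * (2 ^ (a + 1) - 1)) := by
  have hbn : b < n := by
    rw [hb, ha, mul_comm, ← Nat.mod_eq_sub_mul_div]; exact Nat.mod_lt S hn
  have hS : a * n + b = S := by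
    rw [hb, ha, Nat.add_sub_cancel' (Nat.div_mul_le_self S n)]
  have hlower (w : Fin n → ℕ) (hw : ∑ k, w k = S) :
      (n - b) * 2 ^ a + b * 2 ^ (a + 1) ≤ ∑ k, 2 ^ w k := by
    have hB : (n - b) * 2 ^ a + b * 2 ^ (a + 1) = 2 ^ a * (n + b) := by zify [hbn.le]; ring
    have hw' : ∑ k, w k = a * #(univ : Finset (Fin n)) + b := by rw [hw, card_fin, hS]
    simpa [hB] using univ.two_pow_mul_card_add_le_sum_two_pow w hw'
  have hbal_sum : ∑ k : Fin n, (if (k : ℕ) < b then a + 1 else a) = S := by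
    simp only [Fin.sum_univ_ite_lt hbn.le, smul_eq_mul, ← hS]
    zify [hbn.le]; ring
  have hbal_pow : ∑ k : Fin n, 2 ^ (if (k : ℕ) < b then a + 1 else a) =
      (n - b) * 2 ^ a + b * 2 ^ (a + 1) := by
    simp only [apply_ite (2 ^ ·), Fin.sum_univ_ite_lt hbn.le, smul_eq_mul, add_comm]
  have hbal_pred : ∑ k : Fin n, (2 ^ (if (k : ℕ) < b then a + 1 else a) - 1) =
      (n - b) * (2 ^ a - 1) + b * (2 ^ (a + 1) - 1) := by
    simp only [apply_ite (2 ^ · - 1), Fin.sum_univ_ite_lt hbn.le, smul_eq_mul, add_comm]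
  refine ⟨hlower, ⟨hbal_sum, hbal_pow⟩, ⟨_, hbal_sum, hbal_pred.symm⟩, ?_⟩
  rintro t ⟨w, hw, rfl⟩
  rw [← hbal_pred, univ.sum_two_pow_sub_one, univ.sum_two_pow_sub_one, hbal_pow]
  exact Nat.sub_le_sub_right (hlower w hw) _
end

section
/- Let n ≥ 1, W ≥ 1 and S be natural numbers with S ≤ n·W, and set q = ⌊S/W⌋ and r = S − q·W. Then for every tuple (w_1, …, w_n) of natural numbers with w_k ≤ W for all k and ∑_{k=1}^n w_k = S, one has (as integers) ∑_{k=1}^n 2^{w_k} ≤ q·2^W + 2^r + (n − q − 1). Moreover, if q < n this bound is attained by the concentrated tuple with q coordinates equal to W, one coordinate equal to r, and the remaining n − q − 1 coordinates equal to 0. -/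
open Finset

private def bnd (n W S : ℕ) : ℤ :=
  ((S / W : ℕ) : ℤ) * 2 ^ W + 2 ^ (S % W) + ((n : ℤ) - ((S / W : ℕ) : ℤ) - 1)

private lemma sum_two_update {n : ℕ} {M : Type*} [AddCommMonoid M] (f : Fin n → M)
    {i j : Fin n} (hij : i ≠ j) (a b : M) :
    (∑ k, Function.update (Function.update f i a) j b k) + (f i + f j) =
      (∑ k, f k) + (a + b) := by
  classical
  have hi : i ∈ univ \ ({j} : Finset (Fin n)) := by simp [hij]
  rw [Finset.sum_update_of_mem (mem_univ j), Finset.sum_update_of_mem hi]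
  have h1 : (∑ k, f k) = (∑ k ∈ univ \ {j}, f k) + f j :=
    Finset.sum_eq_sum_sdiff_singleton_add (mem_univ j) f
  have h2 : (∑ k ∈ univ \ ({j} : Finset (Fin n)), f k)
      = (∑ k ∈ (univ \ {j}) \ {i}, f k) + f i :=
    Finset.sum_eq_sum_sdiff_singleton_add hi f
  rw [h1, h2]; abel

private lemma sum_two_update' {n : ℕ} {M : Type*} [AddCommMonoid M] (g : ℕ → M)
    (w : Fin n → ℕ) {i j : Fin n} (hij : i ≠ j) (a b : ℕ) :
    (∑ k, g (Function.update (Function.update w i a) j b k)) + (g (w i) + g (w j)) =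
      (∑ k, g (w k)) + (g a + g b) := by
  classical
  have hcomp : (fun k => g (Function.update (Function.update w i a) j b k)) =
      Function.update (Function.update (fun k => g (w k)) i (g a)) j (g b) := by
    funext k
    simp only [Function.update_apply]
    split_ifs <;> rfl
  calc (∑ k, g (Function.update (Function.update w i a) j b k)) + (g (w i) + g (w j))
      = (∑ k, Function.update (Function.update (fun k => g (w k)) i (g a)) j (g b) k)
        + ((fun k => g (w k)) i + (fun k => g (w k)) j) := by rw [hcomp]
    _ = (∑ k, g (w k)) + (g a + g b) := sum_two_update (fun k => g (w k)) hij (g a) (g b)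

private lemma terminal_case {n W : ℕ} (hW : 1 ≤ W) (w : Fin n → ℕ)
    (hcap : ∀ k, w k ≤ W)
    (hterm : ∀ i j : Fin n, i ≠ j → 0 < w i → w i ≤ w j → W ≤ w j) :
    ∑ k, (2:ℤ) ^ w k ≤ bnd n W (∑ k, w k) := by
  classical
  set A := univ.filter (fun k => w k = W) with hA
  set B := univ.filter (fun k => ¬ w k = W) with hB
  have hcardAB : A.card + B.card = n := by
    rw [hA, hB, Finset.card_filter_add_card_filter_not]
    simp
  have hsplitS : (∑ k, w k) = (∑ k ∈ A, w k) + (∑ k ∈ B, w k) := by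
    rw [hA, hB, Finset.sum_filter_add_sum_filter_not]
  have hsplitP : (∑ k, (2:ℤ)^(w k)) = (∑ k ∈ A, (2:ℤ)^(w k)) + (∑ k ∈ B, (2:ℤ)^(w k)) := by
    rw [hA, hB, Finset.sum_filter_add_sum_filter_not]
  have hAW : ∀ k ∈ A, w k = W := by
    intro k hk; simpa [hA] using hk
  have hSA : (∑ k ∈ A, w k) = A.card * W := by
    rw [Finset.sum_congr rfl hAW, Finset.sum_const, smul_eq_mul]
  have hPA : (∑ k ∈ A, (2:ℤ)^(w k)) = (A.card : ℤ) * 2^W := by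
    rw [Finset.sum_congr rfl (fun k hk => by rw [hAW k hk]), Finset.sum_const, nsmul_eq_mul]
  by_cases hM : ∃ j, 0 < w j ∧ w j < W
  · obtain ⟨j, hj1, hj2⟩ := hM
    have hjB : j ∈ B := by simp [hB]; omega
    have hzero : ∀ k ∈ B.erase j, w k = 0 := by
      intro k hk
      have hkj : k ≠ j := (Finset.mem_erase.mp hk).1
      have hkB : k ∈ B := (Finset.mem_erase.mp hk).2
      have hkW : ¬ w k = W := by simpa [hB] using hkB
      have hck := hcap k
      by_contra h0
      rcases le_total (w k) (w j) with h | h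
      · exact absurd (hterm k j hkj (by omega) h) (by omega)
      · exact absurd (hterm j k (Ne.symm hkj) hj1 h) (by omega)
    have hSB : (∑ k ∈ B, w k) = w j := by
      rw [← Finset.add_sum_erase _ _ hjB, Finset.sum_eq_zero hzero, add_zero]
    have hPB : (∑ k ∈ B, (2:ℤ)^(w k)) = 2^(w j) + ((B.card - 1 : ℕ) : ℤ) := by
      rw [← Finset.add_sum_erase _ _ hjB]
      congr 1
      rw [Finset.sum_congr rfl (fun k hk => by rw [hzero k hk])]
      simp [Finset.card_erase_of_mem hjB]
    have hBpos : 1 ≤ B.card := Finset.card_pos.mpr ⟨j, hjB⟩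
    have hSval : (∑ k, w k) = w j + W * A.card := by rw [hsplitS, hSA, hSB]; ring
    have hqv : (∑ k, w k) / W = A.card := by
      rw [hSval, Nat.add_mul_div_left _ _ (by omega : 0 < W), Nat.div_eq_of_lt hj2, zero_add]
    have hrv : (∑ k, w k) % W = w j := by
      rw [hSval, Nat.add_mul_mod_self_left, Nat.mod_eq_of_lt hj2]
    rw [hsplitP, hPA, hPB]
    unfold bnd
    rw [hqv, hrv]
    have hc : ((B.card - 1 : ℕ) : ℤ) = (n : ℤ) - (A.card : ℤ) - 1 := by omega
    rw [hc]; exact le_of_eq (by ring)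
  · push_neg at hM
    have hzero : ∀ k ∈ B, w k = 0 := by
      intro k hk
      have hkW : ¬ w k = W := by simpa [hB] using hk
      have := hM k
      have := hcap k
      omega
    have hSB : (∑ k ∈ B, w k) = 0 := Finset.sum_eq_zero hzero
    have hPB : (∑ k ∈ B, (2:ℤ)^(w k)) = (B.card : ℤ) := by
      rw [Finset.sum_congr rfl (fun k hk => by rw [hzero k hk])]
      simp
    have hSval : (∑ k, w k) = A.card * W := by rw [hsplitS, hSA, hSB, add_zero]
    have hqv : (∑ k, w k) / W = A.card := by
      rw [hSval, Nat.mul_div_cancel _ (by omega : 0 < W)]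
    have hrv : (∑ k, w k) % W = 0 := by rw [hSval, Nat.mul_mod_left]
    rw [hsplitP, hPA, hPB]
    unfold bnd
    rw [hqv, hrv]
    have hc : (B.card : ℤ) = (n : ℤ) - (A.card : ℤ) := by omega
    rw [hc]; exact le_of_eq (by ring)

private lemma key (W : ℕ) (hW : 1 ≤ W) :
    ∀ (m n : ℕ) (w : Fin n → ℕ), (∀ k, w k ≤ W) →
      n * W^2 - (∑ k, (w k)^2) ≤ m →
      ∑ k, (2:ℤ)^(w k) ≤ bnd n W (∑ k, w k) := by
  intro m
  induction m with
  | zero =>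
    intro n w hcap hmeas
    apply terminal_case hW w hcap
    intro i j hij h1 h2
    -- measure 0 with caps forces all coords = W
    by_contra hjW
    have hlt : w j < W := by omega
    have hsum : (∑ k, (w k)^2) < n * W^2 := by
      have : (∑ k, (w k)^2) < ∑ k : Fin n, W^2 := by
        apply Finset.sum_lt_sum (fun k _ => Nat.pow_le_pow_left (hcap k) 2)
        exact ⟨j, mem_univ j, Nat.pow_lt_pow_left hlt (by norm_num)⟩
      simpa [Finset.sum_const, Finset.card_univ, mul_comm] using this
    omega
  | succ m ih =>
    intro n w hcap hmeas
    by_cases hex : ∃ i j, i ≠ j ∧ 0 < w i ∧ w i ≤ w j ∧ w j < W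
    · obtain ⟨i, j, hij, h1, h2, h3⟩ := hex
      obtain ⟨c, hc⟩ : ∃ c, w i = c + 1 := ⟨w i - 1, by omega⟩
      set w' := Function.update (Function.update w i c) j (w j + 1) with hw'
      have hid := sum_two_update' (fun x => x) w hij c (w j + 1)
      have hsq := sum_two_update' (fun x => x^2) w hij c (w j + 1)
      have hpw := sum_two_update' (fun x => (2:ℤ)^x) w hij c (w j + 1)
      rw [hc] at hsq hpw h2
      simp only [← hw'] at hid hsq hpw
      have hcap' : ∀ k, w' k ≤ W := by
        intro k
        have := hcap k
        rw [hw']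
        simp only [Function.update_apply]
        split_ifs <;> omega
      have hsum' : (∑ k, w' k) = ∑ k, w k := by omega
      have hsq' : (∑ k, (w k)^2) + 1 ≤ ∑ k, (w' k)^2 := by nlinarith [hsq, h2]
      have hpow' : ∑ k, (2:ℤ)^(w k) ≤ ∑ k, (2:ℤ)^(w' k) := by
        have hcc : (2:ℤ)^c ≤ 2^(w j) := pow_le_pow_right₀ (by norm_num) (by omega)
        have e1 : (2:ℤ)^(c + 1) = 2 * 2^c := by rw [pow_succ]; ring
        have e2 : (2:ℤ)^(w j + 1) = 2 * 2^(w j) := by rw [pow_succ]; ring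
        linarith [hpw, hcc, e1, e2]
      have := ih n w' hcap' (by omega)
      rw [hsum'] at this
      linarith
    · push_neg at hex
      apply terminal_case hW w hcap
      intro i j hij h1 h2
      have := hex i j hij h1 h2
      omega

/-- Maximizing `∑ 2^{w_k}` (as integers) over tuples capped by `W` with fixed
sum `S`: the bound `q 2^W + 2^r + (n - q - 1)` holds, and if `q < n` it is
attained by the concentrated tuple with `q` coordinates equal to `W`, one
coordinate equal to `r`, and the remaining `n - q - 1` coordinates zero. -/
theorem max_mac_conditions_concentrated (n W S : ℕ) (hn : 1 ≤ n) (hW : 1 ≤ W)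
    (hS : S ≤ n * W) (q r : ℕ) (hq : q = S / W) (hr : r = S - q * W) :
    (∀ w : Fin n → ℕ, (∀ k, w k ≤ W) → ∑ k, w k = S →
      ∑ k, (2 : ℤ) ^ w k ≤ (q : ℤ) * 2 ^ W + 2 ^ r + ((n : ℤ) - q - 1)) ∧
    (q < n →
      (∀ k : Fin n, (if (k : ℕ) < q then W else if (k : ℕ) = q then r else 0) ≤ W) ∧
      ∑ k : Fin n, (if (k : ℕ) < q then W else if (k : ℕ) = q then r else 0) = S ∧
      ∑ k : Fin n, (2 : ℤ) ^ (if (k : ℕ) < q then W else if (k : ℕ) = q then r else 0) =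
        (q : ℤ) * 2 ^ W + 2 ^ r + ((n : ℤ) - q - 1)) := by
  have hdm := Nat.div_add_mod S W
  have hrmod : r = S % W := by
    have h2 : q * W = W * (S / W) := by rw [hq, mul_comm]
    omega
  have hrlt : r < W := by rw [hrmod]; exact Nat.mod_lt _ (by omega)
  have hqrS : q * W + r = S := by
    have h2 : q * W = W * (S / W) := by rw [hq, mul_comm]
    omega
  constructor
  · intro w hcap hsum
    have := key W hW (n * W^2) n w hcap (Nat.sub_le _ _)
    rw [hsum] at this
    unfold bnd at this
    rw [← hq, ← hrmod] at this
    exact this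
  · intro hqn
    refine ⟨fun k => by split_ifs <;> omega, ?_, ?_⟩
    · rw [Fin.sum_univ_eq_sum_range (fun k => if k < q then W else if k = q then r else 0) n]
      rw [Finset.range_eq_Ico, ← Finset.sum_Ico_consecutive _ (Nat.zero_le (q+1)) hqn,
        ← Finset.range_eq_Ico]
      have h1 : (∑ k ∈ Finset.range (q+1), if k < q then W else if k = q then r else 0)
          = q * W + r := by
        rw [Finset.sum_range_succ]
        have : (∑ k ∈ Finset.range q, if k < q then W else if k = q then r else 0)
            = ∑ k ∈ Finset.range q, W := by
          apply Finset.sum_congr rfl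
          intro k hk
          simp [Finset.mem_range.mp hk]
        rw [this]
        simp [Finset.sum_const]
      have h2 : (∑ k ∈ Finset.Ico (q+1) n, if k < q then W else if k = q then r else 0) = 0 := by
        apply Finset.sum_eq_zero
        intro k hk
        have := (Finset.mem_Ico.mp hk).1
        have h3 : ¬ k < q := by omega
        have h4 : ¬ k = q := by omega
        simp [h3, h4]
      rw [h1, h2]
      omega
    · rw [Fin.sum_univ_eq_sum_range (fun k => (2:ℤ)^(if k < q then W else if k = q then r else 0)) n]
      rw [Finset.range_eq_Ico, ← Finset.sum_Ico_consecutive _ (Nat.zero_le (q+1)) hqn,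
        ← Finset.range_eq_Ico]
      have h1 : (∑ k ∈ Finset.range (q+1),
            (2:ℤ)^(if k < q then W else if k = q then r else 0))
          = (q : ℤ) * 2^W + 2^r := by
        rw [Finset.sum_range_succ]
        have : (∑ k ∈ Finset.range q, (2:ℤ)^(if k < q then W else if k = q then r else 0))
            = ∑ k ∈ Finset.range q, (2:ℤ)^W := by
          apply Finset.sum_congr rfl
          intro k hk
          simp [Finset.mem_range.mp hk]
        rw [this]
        simp [Finset.sum_const]
      have h2 : (∑ k ∈ Finset.Ico (q+1) n,
            (2:ℤ)^(if k < q then W else if k = q then r else 0))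
          = ((n - q - 1 : ℕ) : ℤ) := by
        have : (∑ k ∈ Finset.Ico (q+1) n,
            (2:ℤ)^(if k < q then W else if k = q then r else 0))
            = ∑ k ∈ Finset.Ico (q+1) n, (1:ℤ) := by
          apply Finset.sum_congr rfl
          intro k hk
          have := (Finset.mem_Ico.mp hk).1
          have h3 : ¬ k < q := by omega
          have h4 : ¬ k = q := by omega
          simp [h3, h4]
        rw [this]
        simp [Nat.card_Ico]
        omega
      rw [h1, h2]
      have : ((n - q - 1 : ℕ) : ℤ) = (n : ℤ) - q - 1 := by omega
      rw [this]
end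

section
/- Let n ≥ 1, W ≥ 1, S and M be natural numbers with S ≤ n·W, and set q = ⌊S/W⌋ and r = S − q·W. Then for every tuple (w_1, …, w_n) of natural numbers with w_k ≤ W for all k and ∑_{k=1}^n w_k = S, one has, as integers, ∑_{k=1}^n w_k·(M + 1 − w_k) ≥ q·W·(M + 1 − W) + r·(M + 1 − r). -/
/-- Two-variable step: adding one capped coordinate. -/
lemma step_sq (W a b : ℕ) (hW : 1 ≤ W) (ha : a ≤ W) :
    a ^ 2 + (b / W * W ^ 2 + (b % W) ^ 2) ≤ (a + b) / W * W ^ 2 + ((a + b) % W) ^ 2 := by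
  obtain ⟨q', r', hb, hr'⟩ : ∃ q' r', b = r' + W * q' ∧ r' < W :=
    ⟨b / W, b % W, by rw [Nat.mod_add_div], Nat.mod_lt _ hW⟩
  have hbd : b / W = q' := by rw [hb, Nat.add_mul_div_left _ _ hW, Nat.div_eq_of_lt hr']; omega
  have hbm : b % W = r' := by rw [hb, Nat.add_mul_mod_self_left, Nat.mod_eq_of_lt hr']
  have hab : a + b = (a + r') + W * q' := by omega
  rw [hbd, hbm, hab, Nat.add_mul_div_left _ _ hW, Nat.add_mul_mod_self_left]
  by_cases h : a + r' < W
  · rw [Nat.div_eq_of_lt h, Nat.mod_eq_of_lt h]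
    nlinarith
  · push_neg at h
    have hs : a + r' = (a + r' - W) + W * 1 := by omega
    rw [hs, Nat.add_mul_div_left _ _ hW, Nat.add_mul_mod_self_left,
      Nat.div_eq_of_lt (by omega), Nat.mod_eq_of_lt (by omega)]
    zify
    nlinarith [mul_nonneg (by push_cast; linarith : (0:ℤ) ≤ (W:ℤ) - a)
      (by push_cast; linarith : (0:ℤ) ≤ (W:ℤ) - r')]

lemma sumsq_le {ι : Type*} [DecidableEq ι] (W : ℕ) (hW : 1 ≤ W) (s : Finset ι) (w : ι → ℕ)
    (h : ∀ k ∈ s, w k ≤ W) :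
    ∑ k ∈ s, (w k) ^ 2 ≤ (∑ k ∈ s, w k) / W * W ^ 2 + ((∑ k ∈ s, w k) % W) ^ 2 := by
  induction s using Finset.induction with
  | empty => simp
  | @insert a t hx ih =>
    rw [Finset.sum_insert hx, Finset.sum_insert hx]
    calc (w a) ^ 2 + ∑ k ∈ t, (w k) ^ 2
        ≤ (w a) ^ 2 + ((∑ k ∈ t, w k) / W * W ^ 2 + ((∑ k ∈ t, w k) % W) ^ 2) := by
          have := ih (fun k hk => h k (Finset.mem_insert_of_mem hk)); omega
      _ ≤ _ := step_sq W (w a) _ hW (h a (Finset.mem_insert_self a t))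

/-- Minimizing `∑ w_k (M + 1 - w_k)` over capped tuples with fixed sum `S`:
the concentrated allocation is optimal. -/
theorem min_quadratic_terms_concentrated (n W S M : ℕ) (hn : 1 ≤ n) (hW : 1 ≤ W)
    (hS : S ≤ n * W) (q r : ℕ) (hq : q = S / W) (hr : r = S - q * W) :
    ∀ w : Fin n → ℕ, (∀ k, w k ≤ W) → ∑ k, w k = S →
      (q : ℤ) * W * ((M : ℤ) + 1 - W) + (r : ℤ) * ((M : ℤ) + 1 - r) ≤
        ∑ k, (w k : ℤ) * ((M : ℤ) + 1 - w k) := by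
  intro w hcap hsum
  have hdm := Nat.div_add_mod S W
  have hr' : r = S % W := by
    rw [hr, hq, mul_comm]; omega
  have hSqr : S = q * W + r := by rw [hq, hr', mul_comm]; omega
  -- the key ℕ inequality
  have hkey : ∑ k, (w k) ^ 2 ≤ q * W ^ 2 + r ^ 2 := by
    have := sumsq_le W hW Finset.univ w (fun k _ => hcap k)
    rwa [hsum, ← hq, ← hr'] at this
  have hkeyZ : (∑ k, ((w k : ℤ)) ^ 2) ≤ (q : ℤ) * W ^ 2 + (r : ℤ) ^ 2 := by
    exact_mod_cast hkey
  have hsumZ : (∑ k, (w k : ℤ)) = (S : ℤ) := by exact_mod_cast hsum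
  have hSZ : (S : ℤ) = (q : ℤ) * W + r := by exact_mod_cast hSqr
  have e1 : ∑ k, (w k : ℤ) * ((M : ℤ) + 1 - w k)
      = ((M : ℤ) + 1) * S - ∑ k, ((w k : ℤ)) ^ 2 := by
    rw [← hsumZ, Finset.mul_sum, ← Finset.sum_sub_distrib]
    exact Finset.sum_congr rfl (fun k _ => by ring)
  rw [e1]
  have e2 : (q : ℤ) * W * ((M : ℤ) + 1 - W) + (r : ℤ) * ((M : ℤ) + 1 - r)
      = ((M : ℤ) + 1) * ((q : ℤ) * W + r) - ((q : ℤ) * W ^ 2 + (r : ℤ) ^ 2) := by ring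
  rw [e2, ← hSZ]
  linarith
end

section
/- (Theorem 2, maximum number of quadratic terms.) Let τ ≥ 1 and L ≥ 1 be natural numbers, n = τ + L, M_T = C(n, τ+1). Let i and m be natural numbers with i ≤ M_T and m ≤ (τ+1)(M_T − i), set S = (τ+1)(M_T − i) − m, U_m = M_T − i, a = ⌊S/n⌋ and b = S − a·n. Then for every natural number M ≤ U_m and every tuple (w_1, …, w_n) of natural numbers with w_k ≤ M for all k and ∑_{k=1}^n w_k = S, one has, as integers, ∑_{k=1}^{n} w_k·(M − w_k + 1) ≤ (n − b)·a·(U_m − a + 1) + b·(a + 1)·(U_m − a). -/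
lemma consec_nonneg (z : ℤ) : 0 ≤ z * (z - 1) := by
  rcases le_or_gt z 0 with h | h
  · nlinarith
  · nlinarith

/-- Theorem 2 (maximum number of quadratic terms). -/
theorem max_num_quadratic_terms (τ L : ℕ) (hτ : 1 ≤ τ) (hL : 1 ≤ L) (n MT : ℕ)
    (hn : n = τ + L) (hMT : MT = Nat.choose n (τ + 1))
    (i m : ℕ) (hi : i ≤ MT) (hm : m ≤ (τ + 1) * (MT - i))
    (S Um a b : ℕ) (hS : S = (τ + 1) * (MT - i) - m) (hUm : Um = MT - i)
    (ha : a = S / n) (hb : b = S - a * n) :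
    ∀ M : ℕ, M ≤ Um → ∀ w : Fin n → ℕ, (∀ k, w k ≤ M) → ∑ k, w k = S →
      ∑ k, (w k : ℤ) * ((M : ℤ) - w k + 1) ≤
        ((n : ℤ) - b) * a * ((Um : ℤ) - a + 1) +
          (b : ℤ) * ((a : ℤ) + 1) * ((Um : ℤ) - a) := by
  intro M hM w hw hsum
  have hMZ : (M : ℤ) ≤ Um := by exact_mod_cast hM
  have han : a * n ≤ S := by rw [ha]; exact Nat.div_mul_le_self S n
  have hbZ : (b : ℤ) = (S : ℤ) - a * n := by
    rw [hb]; push_cast [han]; ring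
  have hsumZ : ∑ k, (w k : ℤ) = S := by exact_mod_cast congrArg Nat.cast hsum
  have key : ∀ k : Fin n, (w k : ℤ) * ((M : ℤ) - w k + 1) ≤
      (a : ℤ) * ((Um : ℤ) - a + 1) + ((w k : ℤ) - a) * ((Um : ℤ) - 2 * a) := by
    intro k
    have h1 : (w k : ℤ) ≤ M := by exact_mod_cast hw k
    have h0 : (0 : ℤ) ≤ w k := by positivity
    have h2 := consec_nonneg ((w k : ℤ) - a)
    nlinarith [mul_nonneg h0 (sub_nonneg.mpr hMZ)]
  calc ∑ k, (w k : ℤ) * ((M : ℤ) - w k + 1)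
      ≤ ∑ k : Fin n, ((a : ℤ) * ((Um : ℤ) - a + 1) + ((w k : ℤ) - a) * ((Um : ℤ) - 2 * a)) :=
        Finset.sum_le_sum fun k _ => key k
    _ = (n : ℤ) * ((a : ℤ) * ((Um : ℤ) - a + 1))
          + ((S : ℤ) - n * a) * ((Um : ℤ) - 2 * a) := by
        rw [Finset.sum_add_distrib, Finset.sum_const, Finset.card_fin,
          ← Finset.sum_mul, Finset.sum_sub_distrib, Finset.sum_const,
          Finset.card_fin, hsumZ]
        push_cast
        ring
    _ = ((n : ℤ) - b) * a * ((Um : ℤ) - a + 1) + (b : ℤ) * ((a : ℤ) + 1) * ((Um : ℤ) - a) := by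
        rw [hbZ]; ring
end
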